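/- Let X, Y, Γ, Θ be Polish spaces, let ν_Y be a locally finite Borel measure on Y, and let ψ : Y × Γ × Θ → [0,∞) be continuous with ∫_Y ψ(y,γ,θ) dν_Y(y) = 1 for every (γ,θ). Suppose that for every (y₀,γ₀) ∈ Y × Γ and every ε > 0 there exist open neighborhoods U_{y₀} ∋ y₀, U_{γ₀} ∋ γ₀ and a compact K ⊂ Θ with ψ < ε on U_{y₀} × U_{γ₀} × (Θ∖K). Let P : X → P(Θ) be weakly continuous and let Q^P_{γ,x} be the probability measure on Y with density y ↦ ∫_Θ ψ(y,γ,θ) dP_x(θ) with respect to ν_Y. Then for every compact K_{ΓX} ⊂ Γ × X and every ε > 0 there exist a compact K_Y ⊂ Y and an open set U ⊇ K_{ΓX} such that Q^P_{γ,x}(Y ∖ K_Y) < ε for all (γ,x) ∈ U. -/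

import Mathlib

open MeasureTheory Filter Topology
open scoped ENNReal NNReal

/-- Every finite Borel measure on a Polish space is tight. -/
lemma polish_tight_aux {α : Type*} [TopologicalSpace α] [PolishSpace α] [MeasurableSpace α]
    [BorelSpace α] (μ : Measure α) [IsFiniteMeasure μ] {δ : ℝ≥0∞} (hδ0 : δ ≠ 0) :
    ∃ C : Set α, IsCompact C ∧ μ Cᶜ < δ := by
  letI := TopologicalSpace.upgradeIsCompletelyMetrizable α
  rcases isEmpty_or_nonempty α with h | h
  · refine ⟨∅, isCompact_empty, ?_⟩
    rw [Set.compl_empty, Set.univ_eq_empty_iff.mpr h]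
    rw [measure_empty]
    exact pos_iff_ne_zero.mpr hδ0
  obtain ⟨u, hu⟩ := TopologicalSpace.exists_dense_seq α
  obtain ⟨f, hfpos, hfsum⟩ := ENNReal.exists_pos_sum_of_countable hδ0 ℕ
  set A : ℕ → ℕ → Set α := fun n m =>
    ⋃ i ∈ Set.Iic m, Metric.closedBall (u i) (1 / (n + 1)) with hA
  have hAclosed : ∀ n m, IsClosed (A n m) := fun n m =>
    (Set.finite_Iic m).isClosed_biUnion fun i _ => Metric.isClosed_closedBall
  have hAmono : ∀ n, Monotone (A n) := fun n m m' hmm' =>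
    Set.biUnion_subset_biUnion_left (Set.Iic_subset_Iic.mpr hmm')
  have hAall : ∀ n, (⋃ m, A n m) = Set.univ := by
    intro n
    ext x
    simp only [Set.mem_iUnion, Set.mem_univ, iff_true]
    obtain ⟨i, hi⟩ := hu.exists_dist_lt x (show (0 : ℝ) < 1 / (n + 1) by positivity)
    exact ⟨i, Set.mem_biUnion (Set.mem_Iic.mpr le_rfl) (Metric.mem_closedBall.mpr hi.le)⟩
  have hM : ∀ n, ∃ m, μ (A n m)ᶜ < f n := by
    intro n
    have h1 : Tendsto (fun m => μ (A n m)ᶜ) atTop (𝓝 (μ (⋂ m, (A n m)ᶜ))) :=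
      MeasureTheory.tendsto_measure_iInter_atTop
        (fun m => ((hAclosed n m).measurableSet.compl).nullMeasurableSet)
        (fun m m' hmm' => Set.compl_subset_compl.mpr (hAmono n hmm'))
        ⟨0, measure_ne_top _ _⟩
    have h2 : (⋂ m, (A n m)ᶜ) = ∅ := by
      rw [← Set.compl_iUnion, hAall n, Set.compl_univ]
    rw [h2, measure_empty] at h1
    exact (h1.eventually_lt_const (show (0 : ℝ≥0∞) < f n from ENNReal.coe_pos.mpr (hfpos n))).exists
  choose m hm using hM
  refine ⟨⋂ n, A n (m n), ?_, ?_⟩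
  · apply TotallyBounded.isCompact_of_isClosed
    · rw [Metric.totallyBounded_iff]
      intro ε hε
      obtain ⟨n, hn⟩ := exists_nat_one_div_lt hε
      refine ⟨u '' Set.Iic (m n), (Set.finite_Iic (m n)).image u, ?_⟩
      intro x hx
      have hx' : x ∈ A n (m n) := Set.mem_iInter.mp hx n
      simp only [hA, Set.mem_iUnion] at hx'
      obtain ⟨i, hi, hxi⟩ := hx'
      refine Set.mem_biUnion (Set.mem_image_of_mem u hi) ?_
      exact Metric.mem_ball.mpr (lt_of_le_of_lt (Metric.mem_closedBall.mp hxi) hn)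
    · exact isClosed_iInter fun n => hAclosed n (m n)
  · calc μ (⋂ n, A n (m n))ᶜ = μ (⋃ n, (A n (m n))ᶜ) := by rw [Set.compl_iInter]
      _ ≤ ∑' n, μ (A n (m n))ᶜ := measure_iUnion_le _
      _ ≤ ∑' n, (f n : ℝ≥0∞) := ENNReal.tsum_le_tsum fun n => (hm n).le
      _ < δ := hfsum

/-- Superlevel sets of a parametric lower integral of a (parameter-)continuous nonnegative
integrand are open. -/
lemma isOpen_lt_lintegral_aux {α β : Type*} [MeasurableSpace α] (μ : Measure α)
    [TopologicalSpace β] [FirstCountableTopology β]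
    (g : α → β → ℝ≥0∞) (hgm : ∀ b, Measurable fun a => g a b)
    (hgc : ∀ a, Continuous (g a)) (c : ℝ≥0∞) :
    IsOpen {b | c < ∫⁻ a, g a b ∂μ} := by
  rw [← isClosed_compl_iff]
  have hset : {b | c < ∫⁻ a, g a b ∂μ}ᶜ = {b | ∫⁻ a, g a b ∂μ ≤ c} := by
    ext b; simp [not_lt]
  rw [hset]
  apply IsSeqClosed.isClosed
  intro x p hx hlim
  have h1 : ∀ a, Tendsto (fun n => g a (x n)) atTop (𝓝 (g a p)) :=
    fun a => ((hgc a).tendsto p).comp hlim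
  have key : ∫⁻ a, g a p ∂μ ≤ liminf (fun n => ∫⁻ a, g a (x n) ∂μ) atTop := by
    have h2 : (fun a => g a p) = fun a => liminf (fun n => g a (x n)) atTop := by
      funext a; exact ((h1 a).liminf_eq).symm
    calc ∫⁻ a, g a p ∂μ = ∫⁻ a, liminf (fun n => g a (x n)) atTop ∂μ := by rw [h2]
      _ ≤ liminf (fun n => ∫⁻ a, g a (x n) ∂μ) atTop :=
        lintegral_liminf_le fun n => hgm (x n)
  exact key.trans (liminf_le_of_frequently_le (Frequently.of_forall hx))

/-- **Uniform tightness of the induced mixture measures (Lemma 4, part 2).**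
Let `ν_Y` be a locally finite Borel measure on `Y`, `ψ` a continuous nonnegative kernel
with unit `ν_Y`-integral which, near every point of `Y × Γ`, decays at infinity in `θ`,
and `P : X → P(Θ)` weakly continuous.  Let `Q_{γ,x}` be the mixture with density
`y ↦ ∫ ψ(y,γ,θ) dP_x` with respect to `ν_Y`.  Then for every compact `K ⊆ Γ × X` and
`ε > 0` there are a compact `K_Y ⊆ Y` and an open `U ⊇ K` with
`Q_{γ,x}(Y ∖ K_Y) < ε` for all `(γ,x) ∈ U`. -/
theorem mixture_uniform_tightness
    {X Y Γ Θ : Type*} [TopologicalSpace X] [PolishSpace X]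
    [TopologicalSpace Y] [PolishSpace Y] [MeasurableSpace Y] [BorelSpace Y]
    [TopologicalSpace Γ] [PolishSpace Γ]
    [TopologicalSpace Θ] [PolishSpace Θ] [MeasurableSpace Θ] [BorelSpace Θ]
    (νY : Measure Y) [IsLocallyFiniteMeasure νY]
    (ψ : Y → Γ → Θ → ℝ) (hψ0 : ∀ y γ t, 0 ≤ ψ y γ t)
    (hψc : Continuous fun p : Y × Γ × Θ => ψ p.1 p.2.1 p.2.2)
    (hψint : ∀ γ t, ∫ y, ψ y γ t ∂νY = 1)
    (hdecay : ∀ (y₀ : Y) (γ₀ : Γ) (ε : ℝ), 0 < ε →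
      ∃ (Uy : Set Y) (Ug : Set Γ) (KΘ : Set Θ),
        IsOpen Uy ∧ y₀ ∈ Uy ∧ IsOpen Ug ∧ γ₀ ∈ Ug ∧ IsCompact KΘ ∧
        ∀ y ∈ Uy, ∀ γ ∈ Ug, ∀ t ∉ KΘ, ψ y γ t < ε)
    (Pm : X → Measure Θ) (hPprob : ∀ x, IsProbabilityMeasure (Pm x))
    (hPw : ∀ f : Θ → ℝ, Continuous f → (∃ C, ∀ t, |f t| ≤ C) →
      Continuous fun x => ∫ t, f t ∂(Pm x))
    (Q : Γ → X → Measure Y)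
    (hQ : ∀ γ x, Q γ x =
      νY.withDensity fun y => ENNReal.ofReal (∫ t, ψ y γ t ∂(Pm x)))
    (K : Set (Γ × X)) (hK : IsCompact K) (ε : ℝ) (hε : 0 < ε) :
    ∃ (KY : Set Y) (U : Set (Γ × X)), IsCompact KY ∧ IsOpen U ∧ K ⊆ U ∧
      ∀ p ∈ U, ((Q p.1 p.2) KYᶜ).toReal < ε := by
  classical
  -- integrability of the kernel slices
  have hint : ∀ γ t, Integrable (fun y => ψ y γ t) νY := by
    intro γ t
    by_contra hcon
    have h1 := hψint γ t
    rw [integral_undef hcon] at h1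
    norm_num at h1
  have hlint : ∀ γ t, ∫⁻ y, ENNReal.ofReal (ψ y γ t) ∂νY = 1 := by
    intro γ t
    rw [← ofReal_integral_eq_lintegral_ofReal (hint γ t)
      (Eventually.of_forall fun y => hψ0 y γ t), hψint γ t, ENNReal.ofReal_one]
  -- joint measurability of the (γ-fixed) kernel
  have hψm : ∀ γ, Measurable fun q : Y × Θ => ENNReal.ofReal (ψ q.1 γ q.2) := by
    intro γ
    refine (ENNReal.continuous_ofReal.comp ?_).measurable
    exact hψc.comp (continuous_fst.prodMk (continuous_const.prodMk continuous_snd))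
  set δ : ℝ := ε / 3 with hδdef
  have hδ : 0 < δ := by positivity
  -- the per-point statement
  have key : ∀ z : Γ × X, ∃ (KY : Set Y) (U : Set (Γ × X)), IsCompact KY ∧ IsOpen U ∧
      z ∈ U ∧ ∀ p ∈ U, Q p.1 p.2 KYᶜ < ENNReal.ofReal ε := by
    rintro ⟨γ₀, x₀⟩
    haveI := hPprob x₀
    set c : ℝ≥0∞ := ENNReal.ofReal (1 - δ) with hcdef
    have hc1 : c < 1 := ENNReal.ofReal_lt_one.mpr (by linarith)
    -- Step A: tightness of `Pm x₀`
    obtain ⟨KΘ, hKΘc, hKΘ⟩ := polish_tight_aux (Pm x₀)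
      (δ := ENNReal.ofReal δ) (ENNReal.ofReal_pos.mpr hδ).ne'
    -- Step B: near every `t : Θ` the kernel puts mass `> c` on a compact set of `y`'s,
    -- uniformly on a product neighborhood in `(γ, t)`.
    have hBex : ∀ t : Θ, ∃ CAB : Set Y × Set Γ × Set Θ,
        IsCompact CAB.1 ∧ IsOpen CAB.2.1 ∧ γ₀ ∈ CAB.2.1 ∧ IsOpen CAB.2.2 ∧
        t ∈ CAB.2.2 ∧
        ∀ γ ∈ CAB.2.1, ∀ s ∈ CAB.2.2, c < ∫⁻ y in CAB.1, ENNReal.ofReal (ψ y γ s) ∂νY := by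
      intro t
      -- the mixture component measure is a probability measure; use tightness on `Y`
      set νt : Measure Y := νY.withDensity fun y => ENNReal.ofReal (ψ y γ₀ t) with hνt
      haveI : IsProbabilityMeasure νt := by
        constructor
        rw [hνt, withDensity_apply _ MeasurableSet.univ, Measure.restrict_univ, hlint γ₀ t]
      have hη : (1 : ℝ≥0∞) - c ≠ 0 := by
        simp only [ne_eq, tsub_eq_zero_iff_le, not_le]
        exact hc1
      obtain ⟨C, hCc, hCsmall⟩ := polish_tight_aux νt hη
      have hCmeas : MeasurableSet C := hCc.isClosed.measurableSet
      have hClt : c < ∫⁻ y in C, ENNReal.ofReal (ψ y γ₀ t) ∂νY := by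
        rw [← withDensity_apply _ hCmeas, ← hνt]
        by_contra hcon
        push_neg at hcon
        have h2 : νt C + νt Cᶜ = 1 := prob_add_prob_compl hCmeas
        have h3 : νt C + νt Cᶜ < c + (1 - c) :=
          ENNReal.add_lt_add_of_le_of_lt (measure_ne_top _ _) hcon hCsmall
        rw [h2, add_tsub_cancel_of_le hc1.le] at h3
        exact lt_irrefl _ h3
      -- openness of the superlevel set
      have hSopen : IsOpen {p : Γ × Θ | c < ∫⁻ y, ENNReal.ofReal (ψ y p.1 p.2) ∂(νY.restrict C)} := by
        refine isOpen_lt_lintegral_aux (νY.restrict C)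
          (fun y (p : Γ × Θ) => ENNReal.ofReal (ψ y p.1 p.2)) ?_ ?_ c
        · intro p
          exact (ENNReal.continuous_ofReal.comp
            (hψc.comp (continuous_id.prodMk continuous_const))).measurable
        · intro y
          exact ENNReal.continuous_ofReal.comp
            (hψc.comp (continuous_const.prodMk continuous_id))
      have hmem : (γ₀, t) ∈ {p : Γ × Θ | c < ∫⁻ y, ENNReal.ofReal (ψ y p.1 p.2) ∂(νY.restrict C)} :=
        hClt
      obtain ⟨A, B, hAo, hBo, hγ₀A, htB, hABsub⟩ := isOpen_prod_iff.mp hSopen γ₀ t hmem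
      exact ⟨(C, A, B), hCc, hAo, hγ₀A, hBo, htB,
        fun γ hγ s hs => hABsub (Set.mk_mem_prod hγ hs)⟩
    choose CAB hCc hAo hγA hBo htB hlt using hBex
    obtain ⟨sfin, hsubK, hsfin, hscov⟩ := hKΘc.elim_finite_subcover_image
      (b := KΘ) (c := fun t => (CAB t).2.2)
      (fun t _ => hBo t) (fun t ht => Set.mem_biUnion ht (htB t))
    set KY0 : Set Y := ⋃ t ∈ sfin, (CAB t).1 with hKY0
    have hKY0c : IsCompact KY0 := hsfin.isCompact_biUnion fun t _ => hCc t
    have hKY0meas : MeasurableSet KY0 := hKY0c.isClosed.measurableSet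
    set WΘ : Set Θ := ⋃ t ∈ sfin, (CAB t).2.2 with hWΘ
    have hWΘo : IsOpen WΘ := isOpen_biUnion fun t _ => hBo t
    set Wγ : Set Γ := ⋂ t ∈ sfin, (CAB t).2.1 with hWγ
    have hWγo : IsOpen Wγ := hsfin.isOpen_biInter fun t _ => hAo t
    have hγ₀W : γ₀ ∈ Wγ := Set.mem_iInter₂.mpr fun t _ => hγA t
    have hWprop : ∀ γ ∈ Wγ, ∀ t ∈ WΘ, c < ∫⁻ y in KY0, ENNReal.ofReal (ψ y γ t) ∂νY := by
      intro γ hγ t ht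
      obtain ⟨t', ht's, htB'⟩ := Set.mem_iUnion₂.mp ht
      exact lt_of_lt_of_le (hlt t' γ (Set.mem_iInter₂.mp hγ t' ht's) t htB')
        (lintegral_mono_set (by
          rw [hKY0]
          exact Set.subset_biUnion_of_mem (u := fun t => (CAB t).1) ht's))
    -- Urysohn function separating `KΘ` from `WΘᶜ`
    letI := TopologicalSpace.upgradeIsCompletelyMetrizable Θ
    obtain ⟨f, hf0, hf1, hf01⟩ := exists_continuous_zero_one_of_isClosed
      (X := Θ) (s := WΘᶜ) (t := KΘ) hWΘo.isClosed_compl hKΘc.isClosed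
      (by rw [Set.disjoint_left]; intro a ha haK; exact ha (hscov haK))
    have hfb : ∃ Cb, ∀ t, |f t| ≤ Cb :=
      ⟨1, fun t => abs_le.mpr ⟨by linarith [(hf01 t).1], (hf01 t).2⟩⟩
    have hfcont := hPw f f.continuous hfb
    set Ux : Set X := {x | 1 - δ < ∫ t, f t ∂Pm x} with hUx
    have hUxo : IsOpen Ux := isOpen_lt continuous_const hfcont
    have hfint : ∀ x, Integrable (⇑f) (Pm x) := by
      intro x
      haveI := hPprob x
      refine Integrable.mono' (integrable_const (1 : ℝ)) f.continuous.aestronglyMeasurable ?_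
      exact Eventually.of_forall fun t => by
        rw [Real.norm_eq_abs]; exact abs_le.mpr ⟨by linarith [(hf01 t).1], (hf01 t).2⟩
    have hKΘmeas : MeasurableSet KΘ := hKΘc.isClosed.measurableSet
    have hx₀ : x₀ ∈ Ux := by
      have h1 : ∫ t in KΘ, f t ∂Pm x₀ = ((Pm x₀) KΘ).toReal := by
        rw [setIntegral_congr_fun hKΘmeas hf1]
        simp [setIntegral_const]
        rfl
      have h2 : ((Pm x₀) KΘ).toReal + ((Pm x₀) KΘᶜ).toReal = 1 := by
        rw [← ENNReal.toReal_add (measure_ne_top _ _) (measure_ne_top _ _),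
          prob_add_prob_compl hKΘmeas, ENNReal.toReal_one]
      have h3 : ((Pm x₀) KΘᶜ).toReal < δ := ENNReal.toReal_lt_of_lt_ofReal hKΘ
      have h4 : ∫ t, f t ∂Pm x₀ = ∫ t in KΘ, f t ∂Pm x₀ + ∫ t in KΘᶜ, f t ∂Pm x₀ :=
        (integral_add_compl hKΘmeas (hfint x₀)).symm
      have h5 : 0 ≤ ∫ t in KΘᶜ, f t ∂Pm x₀ :=
        setIntegral_nonneg hKΘmeas.compl fun t _ => (hf01 t).1
      simp only [hUx, Set.mem_setOf_eq]
      rw [h4, h1]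
      linarith
    -- tail estimate for `Pm x`, `x ∈ Ux`
    have hPtail : ∀ x ∈ Ux, (Pm x) WΘᶜ < ENNReal.ofReal δ := by
      intro x hx
      haveI := hPprob x
      have h1 : (Pm x) WΘᶜ ≤ ∫⁻ t, ENNReal.ofReal (1 - f t) ∂Pm x := by
        rw [← lintegral_indicator_one hWΘo.measurableSet.compl]
        refine lintegral_mono fun t => ?_
        by_cases ht : t ∈ WΘᶜ
        · rw [Set.indicator_of_mem ht]
          have hft : f t = 0 := hf0 ht
          simp [hft]
        · rw [Set.indicator_of_notMem ht]; exact zero_le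
      have hInt : Integrable (fun t => 1 - f t) (Pm x) := by
        exact (integrable_const (1 : ℝ)).sub (hfint x)
      have h2 : ∫⁻ t, ENNReal.ofReal (1 - f t) ∂Pm x = ENNReal.ofReal (1 - ∫ t, f t ∂Pm x) := by
        rw [← ofReal_integral_eq_lintegral_ofReal hInt
          (Eventually.of_forall fun t => by
            show (0 : ℝ) ≤ 1 - f t
            linarith [(hf01 t).2])]
        congr 1
        rw [integral_sub (integrable_const (1 : ℝ)) (hfint x), integral_const]
        simp
      refine h1.trans_lt ?_
      rw [h2]
      have hx' : 1 - δ < ∫ t, f t ∂Pm x := hx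
      exact (ENNReal.ofReal_lt_ofReal_iff hδ).mpr (by linarith)
    -- assemble the per-point conclusion
    refine ⟨KY0, Wγ ×ˢ Ux, hKY0c, hWγo.prod hUxo, ⟨hγ₀W, hx₀⟩, ?_⟩
    rintro ⟨γ, x⟩ ⟨hγ, hx⟩
    haveI := hPprob x
    have hQapp : Q γ x KY0ᶜ = ∫⁻ y in KY0ᶜ, ENNReal.ofReal (∫ t, ψ y γ t ∂Pm x) ∂νY := by
      rw [hQ, withDensity_apply _ hKY0meas.compl]
    have step1 : Q γ x KY0ᶜ ≤ ∫⁻ y in KY0ᶜ, ∫⁻ t, ENNReal.ofReal (ψ y γ t) ∂Pm x ∂νY := by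
      rw [hQapp]
      refine lintegral_mono fun y => ?_
      by_cases hI : Integrable (fun t => ψ y γ t) (Pm x)
      · rw [ofReal_integral_eq_lintegral_ofReal hI (Eventually.of_forall fun t => hψ0 y γ t)]
      · rw [integral_undef hI]; simp
    have step2 : ∫⁻ y in KY0ᶜ, ∫⁻ t, ENNReal.ofReal (ψ y γ t) ∂Pm x ∂νY
        = ∫⁻ t, ∫⁻ y in KY0ᶜ, ENNReal.ofReal (ψ y γ t) ∂νY ∂Pm x :=
      lintegral_lintegral_swap ((hψm γ).aemeasurable)
    have hbound : ∀ t, ∫⁻ y in KY0ᶜ, ENNReal.ofReal (ψ y γ t) ∂νY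
        ≤ ENNReal.ofReal δ + WΘᶜ.indicator 1 t := by
      intro t
      by_cases ht : t ∈ WΘ
      · have h1 : (∫⁻ y in KY0, ENNReal.ofReal (ψ y γ t) ∂νY)
            + ∫⁻ y in KY0ᶜ, ENNReal.ofReal (ψ y γ t) ∂νY = 1 := by
          rw [lintegral_add_compl _ hKY0meas, hlint γ t]
        have h2 := hWprop γ hγ t ht
        have h3 : ∫⁻ y in KY0ᶜ, ENNReal.ofReal (ψ y γ t) ∂νY ≤ 1 - c := by
          apply ENNReal.le_sub_of_add_le_right (by rw [hcdef]; exact ENNReal.ofReal_ne_top)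
          calc (∫⁻ y in KY0ᶜ, ENNReal.ofReal (ψ y γ t) ∂νY) + c
              ≤ (∫⁻ y in KY0ᶜ, ENNReal.ofReal (ψ y γ t) ∂νY)
                + ∫⁻ y in KY0, ENNReal.ofReal (ψ y γ t) ∂νY := add_le_add le_rfl h2.le
            _ = 1 := by rw [add_comm]; exact h1
        have h4 : (1 : ℝ≥0∞) - c ≤ ENNReal.ofReal δ := by
          rw [hcdef]
          by_cases hδ1 : 1 - δ ≤ 0
          · rw [ENNReal.ofReal_eq_zero.mpr hδ1, tsub_zero]
            exact ENNReal.one_le_ofReal.mpr (by linarith)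
          · push_neg at hδ1
            rw [tsub_le_iff_right, ← ENNReal.ofReal_add hδ.le hδ1.le]
            have hone : δ + (1 - δ) = 1 := by ring
            rw [hone, ENNReal.ofReal_one]
        calc ∫⁻ y in KY0ᶜ, ENNReal.ofReal (ψ y γ t) ∂νY ≤ 1 - c := h3
          _ ≤ ENNReal.ofReal δ := h4
          _ ≤ _ := le_self_add
      · have h1 : ∫⁻ y in KY0ᶜ, ENNReal.ofReal (ψ y γ t) ∂νY ≤ 1 := by
          rw [← hlint γ t]; exact setLIntegral_le_lintegral _ _
        have h2 : WΘᶜ.indicator (1 : Θ → ℝ≥0∞) t = 1 :=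
          Set.indicator_of_mem ((Set.mem_compl_iff _ _).mpr ht) _
        calc ∫⁻ y in KY0ᶜ, ENNReal.ofReal (ψ y γ t) ∂νY ≤ 1 := h1
          _ = WΘᶜ.indicator 1 t := h2.symm
          _ ≤ _ := le_add_self
    have step3 : ∫⁻ t, ∫⁻ y in KY0ᶜ, ENNReal.ofReal (ψ y γ t) ∂νY ∂Pm x
        ≤ ENNReal.ofReal δ + (Pm x) WΘᶜ := by
      calc ∫⁻ t, ∫⁻ y in KY0ᶜ, ENNReal.ofReal (ψ y γ t) ∂νY ∂Pm x
          ≤ ∫⁻ t, (ENNReal.ofReal δ + WΘᶜ.indicator 1 t) ∂Pm x := lintegral_mono hbound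
        _ = ENNReal.ofReal δ + (Pm x) WΘᶜ := by
          rw [lintegral_add_left measurable_const, lintegral_const, measure_univ, mul_one,
            lintegral_indicator_one hWΘo.measurableSet.compl]
    calc Q γ x KY0ᶜ ≤ ∫⁻ y in KY0ᶜ, ∫⁻ t, ENNReal.ofReal (ψ y γ t) ∂Pm x ∂νY := step1
      _ = ∫⁻ t, ∫⁻ y in KY0ᶜ, ENNReal.ofReal (ψ y γ t) ∂νY ∂Pm x := step2
      _ ≤ ENNReal.ofReal δ + (Pm x) WΘᶜ := step3
      _ < ENNReal.ofReal δ + ENNReal.ofReal δ :=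
        ENNReal.add_lt_add_left ENNReal.ofReal_ne_top (hPtail x hx)
      _ = ENNReal.ofReal (δ + δ) := (ENNReal.ofReal_add hδ.le hδ.le).symm
      _ < ENNReal.ofReal ε := (ENNReal.ofReal_lt_ofReal_iff hε).mpr (by rw [hδdef]; linarith)
  -- global assembly by compactness
  choose KYf Uf hKYf hUo hUm hUQ using key
  obtain ⟨s, hscov⟩ := hK.elim_finite_subcover Uf hUo
    (fun z _ => Set.mem_iUnion.mpr ⟨z, hUm z⟩)
  refine ⟨⋃ z ∈ s, KYf z, ⋃ z ∈ s, Uf z, s.finite_toSet.isCompact_biUnion fun z _ => hKYf z,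
    isOpen_biUnion fun z _ => hUo z, hscov, ?_⟩
  intro p hp
  obtain ⟨z, hzs, hpz⟩ := Set.mem_iUnion₂.mp hp
  have hsub : (⋃ z ∈ s, KYf z)ᶜ ⊆ (KYf z)ᶜ :=
    Set.compl_subset_compl.mpr (Set.subset_biUnion_of_mem hzs)
  exact ENNReal.toReal_lt_of_lt_ofReal ((measure_mono hsub).trans_lt (hUQ z p hpz))
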